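/- arXiv:1602.07025 — 4 statements merged into one kernel-verified Lean document; each statement's English description precedes it below -/
import Mathlib

section
/- Let 𝔬 be a discrete valuation ring (not a field) with uniformizer π and fraction field K, let n ≥ 1, let w : {1,…,n} → ℕ, and let δ ∈ Mat_n(𝔬) be the diagonal matrix with entries π^{w(i)}. Let C₁,…,C_d ∈ Mat_n(𝔬) satisfy δ·C_k = π·(C_k·δ) for every k. For M ∈ Mat_n(𝔬) with det M ≠ 0, call M stable if Λ(M)·C_k ⊆ Λ(M) for all k, where Λ(M) ⊆ 𝔬ⁿ is the 𝔬-span of the rows of M and row vectors act by right multiplication. Then there exists a unique m̃₁ ∈ ℕ₀ such that for every m ∈ ℕ₀, the matrix M·δ^m is stable if and only if m ≥ m̃₁. Moreover, for every a ∈ ℕ₀ such that π^a·M⁻¹ has all its entries in 𝔬, one has m̃₁ ≤ a. -/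
/-!
Since `δ C = π (C δ)`, pushing a row `x δ^m` of `Λ(M δ^m)` through `C` gives
`x δ^m C = π^m (x C) δ^m`: the factor `π^m` gained on the way compensates for the failure of
`Λ(M)` itself to be `C`-stable. Hence stability of `M δ^m` is monotone in `m`, and it holds as
soon as `π^m 𝔬ⁿ ⊆ Λ(M)`, i.e. as soon as `π^m M⁻¹` is integral. Such an `m` exists because, in
a discrete valuation ring, `det M` divides a power of `π`.
-/

open scoped Matrix

/-- The `𝔬`-span of the rows of a square matrix, i.e. the lattice `Λ(M)`. -/
def rowSpan {𝔬 : Type} [CommRing 𝔬] {n : ℕ} (M : Matrix (Fin n) (Fin n) 𝔬) :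
    Submodule 𝔬 (Fin n → 𝔬) :=
  Submodule.span 𝔬 (Set.range fun i => M i)

/-- `M` is stable (for the right actions of `C₁, …, C_d`) if `Λ(M)·C_k ⊆ Λ(M)`
for all `k`. -/
def IsStableMat {𝔬 : Type} [CommRing 𝔬] {n d : ℕ}
    (C : Fin d → Matrix (Fin n) (Fin n) 𝔬) (M : Matrix (Fin n) (Fin n) 𝔬) : Prop :=
  ∀ k, ∀ v ∈ rowSpan M, v ᵥ* C k ∈ rowSpan M

lemma pow_mul_eq_pow_smul_mul_pow {R A : Type*} [Monoid R] [Monoid A] [MulAction R A]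
    [IsScalarTower R A A] [SMulCommClass R A A] {r : R} {x c : A}
    (h : x * c = r • (c * x)) (m : ℕ) : x ^ m * c = r ^ m • (c * x ^ m) := by
  induction m with
  | zero => simp
  | succ m ih =>
    calc x ^ (m + 1) * c = x ^ m * (r • (c * x)) := by rw [pow_succ, mul_assoc, h]
      _ = r • ((x ^ m * c) * x) := by rw [mul_smul_comm, mul_assoc]
      _ = r ^ (m + 1) • (c * x ^ (m + 1)) := by
        rw [ih, smul_mul_assoc, smul_smul, mul_assoc, ← pow_succ, ← pow_succ']

section RowSpan

variable {𝔬 : Type} [CommRing 𝔬] {n : ℕ}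

lemma mem_rowSpan_iff {M : Matrix (Fin n) (Fin n) 𝔬} {v : Fin n → 𝔬} :
    v ∈ rowSpan M ↔ ∃ u, u ᵥ* M = v := by
  rw [rowSpan, ← Matrix.row_def, ← range_vecMulLinear]
  rfl

lemma vecMul_mem_rowSpan (u : Fin n → 𝔬) (M : Matrix (Fin n) (Fin n) 𝔬) :
    u ᵥ* M ∈ rowSpan M :=
  mem_rowSpan_iff.2 ⟨u, rfl⟩

lemma mem_rowSpan_mul_iff {N δ : Matrix (Fin n) (Fin n) 𝔬} {v : Fin n → 𝔬} :
    v ∈ rowSpan (N * δ) ↔ ∃ x ∈ rowSpan N, x ᵥ* δ = v := by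
  simp only [mem_rowSpan_iff, exists_exists_eq_and, Matrix.vecMul_vecMul]

lemma smul_mem_rowSpan_of_mul_eq_smul_one {M N : Matrix (Fin n) (Fin n) 𝔬} {r : 𝔬}
    (hNM : N * M = r • 1) (v : Fin n → 𝔬) : r • v ∈ rowSpan M := by
  have hv : r • v = (v ᵥ* N) ᵥ* M := by
    rw [Matrix.vecMul_vecMul, hNM, Matrix.vecMul_smul, Matrix.vecMul_one]
  exact hv ▸ vecMul_mem_rowSpan _ M

end RowSpan

section Stability

variable {𝔬 : Type} [CommRing 𝔬] {n d : ℕ} {C : Fin d → Matrix (Fin n) (Fin n) 𝔬}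
  {δ : Matrix (Fin n) (Fin n) 𝔬} {π : 𝔬}

lemma IsStableMat.mul_of_mul_eq_smul (hC : ∀ k, δ * C k = π • (C k * δ))
    {N : Matrix (Fin n) (Fin n) 𝔬} (hN : IsStableMat C N) : IsStableMat C (N * δ) := by
  intro k v hv
  obtain ⟨x, hx, rfl⟩ := mem_rowSpan_mul_iff.1 hv
  have hxC : (x ᵥ* δ) ᵥ* C k = π • ((x ᵥ* C k) ᵥ* δ) := by
    rw [Matrix.vecMul_vecMul, hC, Matrix.vecMul_smul, Matrix.vecMul_vecMul]
  rw [hxC]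
  exact Submodule.smul_mem _ π (mem_rowSpan_mul_iff.2 ⟨_, hN k x hx, rfl⟩)

lemma monotone_isStableMat_mul_pow (hC : ∀ k, δ * C k = π • (C k * δ))
    (M : Matrix (Fin n) (Fin n) 𝔬) : Monotone fun m : ℕ => IsStableMat C (M * δ ^ m) :=
  monotone_nat_of_le_succ fun m hm => by
    rw [pow_succ, ← mul_assoc]
    exact hm.mul_of_mul_eq_smul hC

lemma isStableMat_mul_pow_of_smul_mem (hC : ∀ k, δ * C k = π • (C k * δ))
    {M : Matrix (Fin n) (Fin n) 𝔬} {a : ℕ} (hM : ∀ v, π ^ a • v ∈ rowSpan M) :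
    IsStableMat C (M * δ ^ a) := by
  intro k v hv
  obtain ⟨x, -, rfl⟩ := mem_rowSpan_mul_iff.1 hv
  have hxC : (x ᵥ* δ ^ a) ᵥ* C k = (π ^ a • (x ᵥ* C k)) ᵥ* δ ^ a := by
    rw [Matrix.vecMul_vecMul, pow_mul_eq_pow_smul_mul_pow (hC k), Matrix.vecMul_smul,
      Matrix.smul_vecMul, Matrix.vecMul_vecMul]
  rw [hxC]
  exact mem_rowSpan_mul_iff.2 ⟨_, hM _, rfl⟩

end Stability

lemma exists_mul_eq_pow_smul_one {𝔬 : Type} [CommRing 𝔬] [IsDomain 𝔬]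
    [IsDiscreteValuationRing 𝔬] {π : 𝔬} (hπ : Irreducible π) {n : ℕ}
    {M : Matrix (Fin n) (Fin n) 𝔬} (hM : M.det ≠ 0) :
    ∃ (t : ℕ) (N : Matrix (Fin n) (Fin n) 𝔬), N * M = π ^ t • 1 := by
  obtain ⟨t, u, hu⟩ := IsDiscreteValuationRing.associated_pow_irreducible hM hπ
  refine ⟨t, (u : 𝔬) • M.adjugate, ?_⟩
  rw [Matrix.smul_mul, Matrix.adjugate_mul, smul_smul, mul_comm, hu]

lemma exists_mul_eq_smul_one_of_integral_smul_inv {R K : Type*} [CommRing R] [Field K]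
    [Algebra R K] [IsFractionRing R K] {n : ℕ} {M : Matrix (Fin n) (Fin n) R} (hM : M.det ≠ 0)
    {r : R} (hr : ∀ i j, ∃ x : R, algebraMap R K x = algebraMap R K r *
      (M.map (algebraMap R K))⁻¹ i j) :
    ∃ N : Matrix (Fin n) (Fin n) R, N * M = r • 1 := by
  set f := algebraMap R K
  have hf : Function.Injective f := IsFractionRing.injective R K
  choose N hN using hr
  refine ⟨Matrix.of N, Matrix.map_injective hf ?_⟩
  have hdet : IsUnit (M.map f).det := by
    rw [← RingHom.mapMatrix_apply, ← RingHom.map_det]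
    exact isUnit_iff_ne_zero.2 ((map_ne_zero_iff f hf).2 hM)
  have hNf : (Matrix.of N).map f = f r • (M.map f)⁻¹ := by
    ext i j
    exact hN i j
  dsimp only
  rw [Matrix.map_mul, hNf, Matrix.smul_mul, Matrix.nonsing_inv_mul _ hdet,
    Matrix.map_smul' f r 1 (map_mul f), Matrix.map_one f (map_zero f) (map_one f)]

lemma Nat.find_le_iff_of_monotone {p : ℕ → Prop} [DecidablePred p] (hp : Monotone p)
    (h : ∃ n, p n) (n : ℕ) : Nat.find h ≤ n ↔ p n := by
  rw [Nat.find_le_iff]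
  exact ⟨fun ⟨m, hmn, hm⟩ => hp hmn hm, fun hn => ⟨n, le_rfl, hn⟩⟩

theorem exists_unique_stability_threshold_general {𝔬 : Type} [CommRing 𝔬] [IsDomain 𝔬]
    [IsDiscreteValuationRing 𝔬] (π : 𝔬) (hπ : Irreducible π) (n d : ℕ)
    (δ : Matrix (Fin n) (Fin n) 𝔬)
    (C : Fin d → Matrix (Fin n) (Fin n) 𝔬)
    (hC : ∀ k, δ * C k = π • (C k * δ))
    (M : Matrix (Fin n) (Fin n) 𝔬) (hM : M.det ≠ 0) :
    ∃ m₁ : ℕ,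
      (∀ m : ℕ, IsStableMat C (M * δ ^ m) ↔ m₁ ≤ m) ∧
      (∀ m₁' : ℕ, (∀ m : ℕ, IsStableMat C (M * δ ^ m) ↔ m₁' ≤ m) → m₁' = m₁) ∧
      (∀ a : ℕ,
        (∀ i j, ∃ x : 𝔬, algebraMap 𝔬 (FractionRing 𝔬) x =
            algebraMap 𝔬 (FractionRing 𝔬) π ^ a *
              (M.map (algebraMap 𝔬 (FractionRing 𝔬)))⁻¹ i j) →
        m₁ ≤ a) := by
  classical
  have stable_of_mul_eq {a : ℕ} {N : Matrix (Fin n) (Fin n) 𝔬} (hNM : N * M = π ^ a • 1) :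
      IsStableMat C (M * δ ^ a) :=
    isStableMat_mul_pow_of_smul_mem hC (smul_mem_rowSpan_of_mul_eq_smul_one hNM)
  have hmono := monotone_isStableMat_mul_pow hC M
  obtain ⟨t, N, hNM⟩ := exists_mul_eq_pow_smul_one hπ hM
  have hex : ∃ m, IsStableMat C (M * δ ^ m) := ⟨t, stable_of_mul_eq hNM⟩
  have hfind := Nat.find_le_iff_of_monotone hmono hex
  refine ⟨Nat.find hex, fun m => (hfind m).symm, fun m₁' h => ?_, fun a ha => ?_⟩
  · exact eq_of_forall_ge_iff fun m => (h m).symm.trans (hfind m).symm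
  · obtain ⟨N', hN'M⟩ := exists_mul_eq_smul_one_of_integral_smul_inv (K := FractionRing 𝔬)
      (r := π ^ a) hM (by simpa only [map_pow] using ha)
    exact (hfind a).2 (stable_of_mul_eq hN'M)

/-- existence (and uniqueness) of the distance invariant `m̃₁`. -/
theorem exists_unique_stability_threshold {𝔬 : Type} [CommRing 𝔬] [IsDomain 𝔬]
    [IsDiscreteValuationRing 𝔬] (π : 𝔬) (hπ : Irreducible π) (n d : ℕ) (hn : 1 ≤ n)
    (w : Fin n → ℕ) (δ : Matrix (Fin n) (Fin n) 𝔬)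
    (hδ : δ = Matrix.diagonal fun i => π ^ w i)
    (C : Fin d → Matrix (Fin n) (Fin n) 𝔬)
    (hC : ∀ k, δ * C k = π • (C k * δ))
    (M : Matrix (Fin n) (Fin n) 𝔬) (hM : M.det ≠ 0) :
    ∃ m₁ : ℕ,
      (∀ m : ℕ, IsStableMat C (M * δ ^ m) ↔ m₁ ≤ m) ∧
      (∀ m₁' : ℕ, (∀ m : ℕ, IsStableMat C (M * δ ^ m) ↔ m₁' ≤ m) → m₁' = m₁) ∧
      (∀ a : ℕ,
        (∀ i j, ∃ x : 𝔬, algebraMap 𝔬 (FractionRing 𝔬) x =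
            algebraMap 𝔬 (FractionRing 𝔬) π ^ a *
              (M.map (algebraMap 𝔬 (FractionRing 𝔬)))⁻¹ i j) →
        m₁ ≤ a) :=
  exists_unique_stability_threshold_general π hπ n d δ C hC M hM
end

section
/- Let 𝔬 be a discrete valuation ring with maximal ideal generated by π, residue field k, and normalized valuation v; for a matrix A over 𝔬 let v(A) denote the minimum of the valuations of its entries. Let c ≥ 1 and n₁,…,n_c ≥ 1 with n = n₁+⋯+n_c, partition {1,…,n} into consecutive blocks B₁,…,B_c of sizes n₁,…,n_c, and let b(i) denote the index of the block containing i. Let C₁,…,C_d ∈ Mat_n(𝔬) satisfy (C_k)_{ij} = 0 unless b(j) = b(i)+1, and let δ be the diagonal matrix with entries δ_{ii} = π^{c−b(i)}. Assume that every row vector x ∈ kⁿ with x·C̄_k = 0 for all k (where C̄_k is the reduction of C_k modulo π) is supported on the last block B_c, i.e. {x ∈ kⁿ : x·C̄_k = 0 for all k} equals the k-span of the standard basis vectors e_i with i ∈ B_c. Then for every M ∈ Mat_n(𝔬) with det M ≠ 0 whose row span Λ(M) ⊆ 𝔬ⁿ satisfies Λ(M)·C_k ⊆ Λ(M) for all k,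 one has v(M) = v(M·δ). -/
/-!
Write `Λ` for the row span. Multiplication by `δ` only scales columns by powers of `π`, so
`v(M) ≤ v(Mδ)`; conversely `v(Mδ) ≥ a` says exactly that the last-block coordinates of all of
`Λ` are divisible by `π^a`. One then shows by induction on `t < a` that `π^t ∣ Λ` implies
`π^(t+1) ∣ Λ`, descending through the blocks: if the coordinates of `w = π^t u ∈ Λ` in the
blocks after `B_m` are divisible by `π^(t+1)`, then so are those of `w C_k ∈ Λ`, hence the
reduction of `u` cut down to the blocks `B_m, B_(m+1), …` lies in the common left kernel of
the `C̄_k` (the `C_k` raise the block index by exactly one). The kernel hypothesis then forces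
`π ∣ u` on `B_m`.
-/

open scoped Matrix
open IsLocalRing

theorem Irreducible.residue_eq_zero_iff_dvd {𝔬 : Type*} [CommRing 𝔬] [IsDomain 𝔬]
    [IsDiscreteValuationRing 𝔬] {π : 𝔬} (hπ : Irreducible π) (z : 𝔬) :
    residue 𝔬 z = 0 ↔ π ∣ z := by
  rw [residue_eq_zero_iff, hπ.maximalIdeal_eq, Ideal.mem_span_singleton]

theorem Matrix.vecMul_ite_level_apply {R ι : Type*} [NonAssocSemiring R] [Fintype ι]
    {level : ι → ℕ} {C : Matrix ι ι R} (hC : ∀ i j, level j ≠ level i + 1 → C i j = 0)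
    (u : ι → R) (m : ℕ) (y : ι) :
    ((fun j => if m ≤ level j then u j else 0) ᵥ* C) y =
      if m + 1 ≤ level y then (u ᵥ* C) y else 0 := by
  simp only [Matrix.vecMul, dotProduct]
  split_ifs with hy
  · refine Finset.sum_congr rfl fun j _ => ?_
    split_ifs with hj
    · rfl
    · rw [hC j y (by omega), mul_zero, mul_zero]
  · refine Finset.sum_eq_zero fun j _ => ?_
    split_ifs with hj
    · rw [hC j y (by omega), mul_zero]
    · rw [zero_mul]

section DvdAbove

variable {𝔬 ι K : Type*} [CommRing 𝔬]

def DvdAbove (Λ : Submodule 𝔬 (ι → 𝔬)) (level : ι → ℕ) (r : 𝔬) (m : ℕ) : Prop :=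
  ∀ w ∈ Λ, ∀ y, m ≤ level y → r ∣ w y

theorem DvdAbove.span {s : Set (ι → 𝔬)} {level : ι → ℕ} {r : 𝔬} {m : ℕ}
    (hs : ∀ v ∈ s, ∀ y, m ≤ level y → r ∣ v y) : DvdAbove (Submodule.span 𝔬 s) level r m := by
  intro w hw y hy
  induction hw using Submodule.span_induction with
  | mem v hv => exact hs v hv y hy
  | zero => exact dvd_zero r
  | add u v _ _ hu hv => exact dvd_add hu hv
  | smul a v _ hv => exact hv.mul_left a

variable [Fintype ι] [IsDomain 𝔬] [IsDiscreteValuationRing 𝔬] {π : 𝔬} {Λ : Submodule 𝔬 (ι → 𝔬)}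
  {level : ι → ℕ} {top : ℕ} {C : K → Matrix ι ι 𝔬}

theorem DvdAbove.of_succ (hπ : Irreducible π)
    (hC : ∀ k i j, level j ≠ level i + 1 → C k i j = 0)
    (hker : ∀ x : ι → ResidueField 𝔬, (∀ k, x ᵥ* (C k).map (residue 𝔬) = 0) →
      ∀ y, level y < top → x y = 0)
    (hstab : ∀ k, ∀ w ∈ Λ, w ᵥ* C k ∈ Λ) {t m : ℕ} (ht : DvdAbove Λ level (π ^ t) 0)
    (hm : m < top) (hsucc : DvdAbove Λ level (π ^ (t + 1)) (m + 1)) :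
    DvdAbove Λ level (π ^ (t + 1)) m := by
  intro w hw y hy
  rcases hy.lt_or_eq with hlt | rfl
  · exact hsucc w hw y hlt
  choose u hu using fun j => ht w hw j (Nat.zero_le _)
  have hw_eq : w = π ^ t • u := funext hu
  have hker_u : ∀ k, (residue 𝔬 ∘ fun j => if level y ≤ level j then u j else 0) ᵥ*
      (C k).map (residue 𝔬) = 0 := by
    intro k
    funext z
    rw [← RingHom.map_vecMul, Matrix.vecMul_ite_level_apply (hC k), Pi.zero_apply,
      hπ.residue_eq_zero_iff_dvd]
    split_ifs with hz
    · have hwC : π ^ (t + 1) ∣ π ^ t * (u ᵥ* C k) z := by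
        simpa [hw_eq, Matrix.smul_vecMul] using hsucc _ (hstab k w hw) z hz
      rwa [pow_succ, mul_dvd_mul_iff_left (pow_ne_zero t hπ.ne_zero)] at hwC
    · exact dvd_zero π
  have hu_dvd : π ∣ u y := by
    simpa [hπ.residue_eq_zero_iff_dvd] using hker _ hker_u y hm
  rw [hu y, pow_succ]
  exact mul_dvd_mul_left _ hu_dvd

theorem DvdAbove.zero_of_top (hπ : Irreducible π)
    (hC : ∀ k i j, level j ≠ level i + 1 → C k i j = 0)
    (hker : ∀ x : ι → ResidueField 𝔬, (∀ k, x ᵥ* (C k).map (residue 𝔬) = 0) →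
      ∀ y, level y < top → x y = 0)
    (hstab : ∀ k, ∀ w ∈ Λ, w ᵥ* C k ∈ Λ) (a : ℕ) (htop : DvdAbove Λ level (π ^ a) top) :
    DvdAbove Λ level (π ^ a) 0 := by
  induction a with
  | zero => exact fun w _ y _ => (pow_zero π).symm ▸ one_dvd (w y)
  | succ t ih =>
    have ht : DvdAbove Λ level (π ^ t) 0 :=
      ih fun w hw y hy => (pow_dvd_pow π t.le_succ).trans (htop w hw y hy)
    exact Nat.decreasingInduction (motive := fun m _ => DvdAbove Λ level (π ^ (t + 1)) m)
      (fun _ hm => DvdAbove.of_succ hπ hC hker hstab ht hm) htop (Nat.zero_le top)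

end DvdAbove

theorem valuation_eq_of_stable_general {𝔬 : Type} [CommRing 𝔬] [IsDomain 𝔬]
    [IsDiscreteValuationRing 𝔬] (π : 𝔬) (hπ : Irreducible π)
    (c : ℕ) (nsz : Fin c → ℕ) (d : ℕ)
    (C : Fin d → Matrix ((i : Fin c) × Fin (nsz i)) ((i : Fin c) × Fin (nsz i)) 𝔬)
    (hC : ∀ k x y, ((y : (i : Fin c) × Fin (nsz i)).1.val ≠ (x : (i : Fin c) × Fin (nsz i)).1.val + 1) → C k x y = 0)
    (δ : Matrix ((i : Fin c) × Fin (nsz i)) ((i : Fin c) × Fin (nsz i)) 𝔬)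
    (hδ : δ = Matrix.diagonal fun x => π ^ (c - (x.1.val + 1)))
    (hker : ∀ x : ((i : Fin c) × Fin (nsz i)) → IsLocalRing.ResidueField 𝔬,
      (∀ k, x ᵥ* (C k).map (IsLocalRing.residue 𝔬) = 0) ↔
        (∀ y : (i : Fin c) × Fin (nsz i), y.1.val + 1 ≠ c → x y = 0))
    (M : Matrix ((i : Fin c) × Fin (nsz i)) ((i : Fin c) × Fin (nsz i)) 𝔬)
    (hstab : ∀ k, ∀ v ∈ Submodule.span 𝔬 (Set.range fun i => M i),
      v ᵥ* C k ∈ Submodule.span 𝔬 (Set.range fun i => M i)) :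
    ∀ a : ℕ, (∀ x y, π ^ a ∣ M x y) ↔ (∀ x y, π ^ a ∣ (M * δ) x y) := by
  intro a
  subst hδ
  constructor
  · intro h x y
    rw [Matrix.mul_diagonal]
    exact (h x y).mul_right _
  · intro h
    have htop : DvdAbove (Submodule.span 𝔬 (Set.range fun i => M i)) (fun y => y.1.val)
        (π ^ a) (c - 1) := by
      refine DvdAbove.span ?_
      rintro _ ⟨x, rfl⟩ y hy
      simpa [Matrix.mul_diagonal, show c - (y.1.val + 1) = 0 by omega] using h x y
    have hall := DvdAbove.zero_of_top hπ hC
      (fun x hx y hy => (hker x).mp hx y (by omega)) hstab a htop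
    exact fun x y => hall (M x) (Submodule.subset_span ⟨x, rfl⟩) y (Nat.zero_le _)

/-- for a DVR `𝔬`, block data `B₁,…,B_c`, matrices `C_k` supported on
the first block superdiagonal, `δ = diag(π^{c−b(i)})`, and the hypothesis that the
common left kernel of the reductions `C̄_k` is spanned by the standard basis vectors
of the last block, every `M` with `det M ≠ 0` whose row span is stable under all
`C_k` satisfies `v(M) = v(M·δ)` (expressed via divisibility of all entries by
powers of the uniformizer `π`). -/
theorem valuation_eq_of_stable {𝔬 : Type} [CommRing 𝔬] [IsDomain 𝔬]
    [IsDiscreteValuationRing 𝔬] (π : 𝔬) (hπ : Irreducible π)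
    (c : ℕ) (hc : 1 ≤ c) (nsz : Fin c → ℕ) (hnsz : ∀ i, 1 ≤ nsz i) (d : ℕ)
    (C : Fin d → Matrix ((i : Fin c) × Fin (nsz i)) ((i : Fin c) × Fin (nsz i)) 𝔬)
    (hC : ∀ k x y, ((y : (i : Fin c) × Fin (nsz i)).1.val ≠ (x : (i : Fin c) × Fin (nsz i)).1.val + 1) → C k x y = 0)
    (δ : Matrix ((i : Fin c) × Fin (nsz i)) ((i : Fin c) × Fin (nsz i)) 𝔬)
    (hδ : δ = Matrix.diagonal fun x => π ^ (c - (x.1.val + 1)))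
    (hker : ∀ x : ((i : Fin c) × Fin (nsz i)) → IsLocalRing.ResidueField 𝔬,
      (∀ k, x ᵥ* (C k).map (IsLocalRing.residue 𝔬) = 0) ↔
        (∀ y : (i : Fin c) × Fin (nsz i), y.1.val + 1 ≠ c → x y = 0))
    (M : Matrix ((i : Fin c) × Fin (nsz i)) ((i : Fin c) × Fin (nsz i)) 𝔬)
    (hM : M.det ≠ 0)
    (hstab : ∀ k, ∀ v ∈ Submodule.span 𝔬 (Set.range fun i => M i),
      v ᵥ* C k ∈ Submodule.span 𝔬 (Set.range fun i => M i)) :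
    ∀ a : ℕ, (∀ x y, π ^ a ∣ M x y) ↔ (∀ x y, π ^ a ∣ (M * δ) x y) :=
  valuation_eq_of_stable_general π hπ c nsz d C hC δ hδ hker M hstab
end

section
/- Let λ = (λ₁ ≥ ⋯ ≥ λ_r) be a partition and N = 1 + λ₁ + ⋯ + λ_r. Define the rational polyhedral cone C_λ = {v ∈ ℝ^N_{≥0} : for all i ∈ {1,…,r}, v₀ ≥ v_{i2} and v_{i1} ≥ v_{i2} ≥ ⋯ ≥ v_{iλ_i}}, with coordinates v₀ and v_{ij} (1 ≤ i ≤ r, 1 ≤ j ≤ λ_i), and let C_λ° be the set obtained by replacing all the defining inequalities (including the nonnegativity of every coordinate) by strict inequalities. Then there exists a vector β ∈ C_λ° with all coordinates positive integers such that for every γ ∈ C_λ° with all coordinates positive integers one has γ − β ∈ C_λ, if and only if λ is a near rectangle, i.e. λ = (c,…,c,1,…,1) for some c ≥ 1 and multiplicities r₁, r₂ ≥ 0. -/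
/-!
An integral interior vector `γ` drops by at least one along each row and from the apex to the
second entry of a row, so `γ_{ij} ≥ λ_i - j` (with `j` counted from `0`) and `γ₀ ≥ max(1, λ₁)`.
These bounds are attained by an integral interior vector, hence any `β` as in the statement must
be this vector. For it, `γ - β ∈ C_λ` reduces to `γ₀ - γ_{i1} ≥ β₀ - β_{i1} = max(1, λ₁) - λ_i + 1`,
which holds for every `γ` iff every row of length at least `2` has length `λ₁`; raising a shorter
row to start at `λ₁` gives a `γ` with `γ₀ - γ_{i1} = 1`. For a partition this says exactly that
`λ` is a near rectangle.
-/

/-- The index set of coordinates: `v₀` (i.e. `none`) together with `v_{ij}`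
for `1 ≤ i ≤ r`, `1 ≤ j ≤ λ_i` (0-indexed here). -/
abbrev ConeIdx (r : ℕ) (lam : Fin r → ℕ) : Type := Option ((i : Fin r) × Fin (lam i))

/-- The rational polyhedral cone `C_λ ⊆ ℝ^N_{≥0}`:
all coordinates nonnegative, `v₀ ≥ v_{i2}` and `v_{i1} ≥ v_{i2} ≥ ⋯ ≥ v_{iλ_i}`. -/
def InCone {r : ℕ} (lam : Fin r → ℕ) (v : ConeIdx r lam → ℝ) : Prop :=
  (∀ x, 0 ≤ v x) ∧
  (∀ i : Fin r, ∀ h : 1 < lam i, v (some ⟨i, ⟨1, h⟩⟩) ≤ v none) ∧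
  (∀ (i : Fin r) (j : Fin (lam i)) (h : j.val + 1 < lam i),
    v (some ⟨i, ⟨j.val + 1, h⟩⟩) ≤ v (some ⟨i, j⟩))

/-- The interior `C_λ°`: all defining inequalities strict. -/
def InConeInterior {r : ℕ} (lam : Fin r → ℕ) (v : ConeIdx r lam → ℝ) : Prop :=
  (∀ x, 0 < v x) ∧
  (∀ i : Fin r, ∀ h : 1 < lam i, v (some ⟨i, ⟨1, h⟩⟩) < v none) ∧
  (∀ (i : Fin r) (j : Fin (lam i)) (h : j.val + 1 < lam i),
    v (some ⟨i, ⟨j.val + 1, h⟩⟩) < v (some ⟨i, j⟩))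

/-- All coordinates are positive integers. -/
def IsPosIntegral {r : ℕ} (lam : Fin r → ℕ) (v : ConeIdx r lam → ℝ) : Prop :=
  ∀ x, ∃ k : ℕ, 0 < k ∧ v x = (k : ℝ)

/-- `λ` is a near rectangle: `λ = (c,…,c,1,…,1)` for some `c ≥ 1`. -/
def IsNearRectangle {r : ℕ} (lam : Fin r → ℕ) : Prop :=
  ∃ c r₁ : ℕ, 1 ≤ c ∧
    ∀ i : Fin r, (i.val < r₁ → lam i = c) ∧ (r₁ ≤ i.val → lam i = 1)

open Finset

section Integral

variable {r : ℕ} {lam : Fin r → ℕ} {γ : ConeIdx r lam → ℝ}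

lemma IsPosIntegral.one_le (hγ : IsPosIntegral lam γ) (x : ConeIdx r lam) : 1 ≤ γ x := by
  obtain ⟨k, hk, hx⟩ := hγ x
  rw [hx]
  exact_mod_cast hk

lemma IsPosIntegral.add_one_le_of_lt (hγ : IsPosIntegral lam γ) {x y : ConeIdx r lam}
    (hxy : γ x < γ y) : γ x + 1 ≤ γ y := by
  obtain ⟨k, -, hx⟩ := hγ x
  obtain ⟨m, -, hy⟩ := hγ y
  rw [hx, hy] at hxy ⊢
  exact_mod_cast Nat.cast_lt.mp hxy

/-- Each step down a row of an integral interior vector loses at least one. -/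
lemma InConeInterior.sub_le_apply_some (hint : InConeInterior lam γ) (hγ : IsPosIntegral lam γ)
    (i : Fin r) (j : Fin (lam i)) :
    (lam i : ℝ) - j ≤ γ (some ⟨i, j⟩) := by
  suffices key : ∀ (d : ℕ) (j : Fin (lam i)), lam i = j + d + 1 → (d : ℝ) + 1 ≤ γ (some ⟨i, j⟩) by
    have hj := j.isLt
    have := key (lam i - j - 1) j (by omega)
    rw [Nat.cast_sub (by omega), Nat.cast_sub (by omega)] at this
    push_cast at this
    linarith
  intro d
  induction d with
  | zero => intro j _; simpa using hγ.one_le _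
  | succ d ih =>
    intro j hj
    have hlt : j.val + 1 < lam i := by omega
    have hnext := ih ⟨j + 1, hlt⟩ (by simp only; omega)
    have hstep := hγ.add_one_le_of_lt (hint.2.2 i j hlt)
    push_cast
    linarith

lemma InConeInterior.le_apply_none (hint : InConeInterior lam γ) (hγ : IsPosIntegral lam γ)
    (i : Fin r) (hi : 1 < lam i) : (lam i : ℝ) ≤ γ none := by
  have hrow := hint.sub_le_apply_some hγ i ⟨1, hi⟩
  have hstep := hγ.add_one_le_of_lt (hint.2.1 i hi)
  push_cast at hrow
  linarith

end Integral

section Staircase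

variable {r : ℕ} (lam : Fin r → ℕ)

noncomputable def staircase (a : ℕ) (h : Fin r → ℕ) : ConeIdx r lam → ℝ
  | none => a
  | some ⟨i, j⟩ => (h i : ℝ) - j

variable {lam} {a : ℕ} {h : Fin r → ℕ}

lemma staircase_isPosIntegral (ha : 0 < a) (hh : ∀ i, lam i ≤ h i) :
    IsPosIntegral lam (staircase lam a h) := by
  rintro (_ | ⟨i, j⟩)
  · exact ⟨a, ha, rfl⟩
  · have hj : (j : ℕ) < h i := lt_of_lt_of_le j.isLt (hh i)
    exact ⟨h i - j, by omega, by simp [staircase, Nat.cast_sub hj.le]⟩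

lemma staircase_inConeInterior (ha : 0 < a) (hh : ∀ i, lam i ≤ h i)
    (hapex : ∀ i, 1 < lam i → h i < a + 1) :
    InConeInterior lam (staircase lam a h) := by
  refine ⟨fun x => ?_, fun i hi => ?_, fun i j _ => ?_⟩
  · obtain ⟨k, hk, hx⟩ := staircase_isPosIntegral ha hh x
    rw [hx]
    exact_mod_cast hk
  · have := hapex i hi
    simp only [staircase, Nat.cast_one, sub_lt_iff_lt_add]
    exact_mod_cast this
  · simp only [staircase]
    push_cast
    linarith

end Staircase

section MinimalVector

variable {r : ℕ} (lam : Fin r → ℕ)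

def minApex : ℕ := univ.sup lam ⊔ 1

noncomputable def minVec : ConeIdx r lam → ℝ := staircase lam (minApex lam) lam

variable {lam}

lemma le_minApex (i : Fin r) : lam i ≤ minApex lam :=
  le_sup_of_le_left (le_sup (mem_univ i))

lemma minVec_isPosIntegral : IsPosIntegral lam (minVec lam) :=
  staircase_isPosIntegral (by simp [minApex]) (fun _ => le_rfl)

lemma minVec_inConeInterior : InConeInterior lam (minVec lam) :=
  staircase_inConeInterior (by simp [minApex]) (fun _ => le_rfl)
    (fun i _ => Nat.lt_succ_of_le (le_minApex i))

lemma minVec_le {γ : ConeIdx r lam → ℝ} (hint : InConeInterior lam γ)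
    (hγ : IsPosIntegral lam γ) : minVec lam ≤ γ := by
  rintro (_ | ⟨i, j⟩)
  · obtain ⟨k, hk, hx⟩ := hγ none
    suffices univ.sup lam ⊔ 1 ≤ k by simpa [minVec, staircase, minApex, hx] using this
    refine sup_le (Finset.sup_le fun i _ => ?_) hk
    rcases Nat.lt_or_ge 1 (lam i) with hi | hi
    · exact_mod_cast hx ▸ hint.le_apply_none hγ i hi
    · omega
  · exact hint.sub_le_apply_some hγ i j

lemma eq_minVec_of_forall_inCone_sub {β : ConeIdx r lam → ℝ} (hint : InConeInterior lam β)
    (hβ : IsPosIntegral lam β)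
    (hmin : ∀ γ, InConeInterior lam γ → IsPosIntegral lam γ → InCone lam (γ - β)) :
    β = minVec lam :=
  le_antisymm
    (fun x => sub_nonneg.mp ((hmin _ minVec_inConeInterior minVec_isPosIntegral).1 x))
    (minVec_le hint hβ)

lemma forall_inCone_sub_minVec_iff :
    (∀ γ, InConeInterior lam γ → IsPosIntegral lam γ → InCone lam (γ - minVec lam)) ↔
      ∀ i, 1 < lam i → lam i = minApex lam := by
  constructor
  · intro hmin i hi
    set h := Function.update lam i (minApex lam)
    have hh : ∀ k, lam k ≤ h k ∧ h k ≤ minApex lam := fun k => by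
      rcases eq_or_ne k i with rfl | hk
      · simp [h, le_minApex]
      · simp [h, hk, le_minApex]
    have hapex := (hmin (staircase lam (minApex lam) h)
      (staircase_inConeInterior (by simp [minApex]) (fun k => (hh k).1)
        (fun k _ => Nat.lt_succ_of_le (hh k).2))
      (staircase_isPosIntegral (by simp [minApex]) (fun k => (hh k).1))).2.1 i hi
    simp only [Pi.sub_apply, minVec, staircase, h, Function.update_self] at hapex
    have : (minApex lam : ℝ) ≤ lam i := by linarith
    exact le_antisymm (le_minApex i) (by exact_mod_cast this)
  · intro hflat γ hint hγ
    refine ⟨fun x => sub_nonneg.mpr (minVec_le hint hγ x), fun i hi => ?_, fun i j hj => ?_⟩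
    · have hstep := hγ.add_one_le_of_lt (hint.2.1 i hi)
      simp only [Pi.sub_apply, minVec, staircase, ← hflat i hi]
      push_cast
      linarith
    · have hstep := hγ.add_one_le_of_lt (hint.2.2 i j hj)
      simp only [Pi.sub_apply, minVec, staircase]
      push_cast
      linarith

end MinimalVector

lemma Fin.val_lt_card_filter_iff {n : ℕ} {p : Fin n → Prop} [DecidablePred p]
    (hp : IsLowerSet {i | p i}) (i : Fin n) : i.val < #{j | p j} ↔ p i := by
  constructor
  · intro hi
    by_contra hpi
    have hsub : ({j | p j} : Finset (Fin n)) ⊆ Iio i := fun j hj => by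
      simp only [mem_filter, mem_univ, true_and] at hj
      exact mem_Iio.mpr (lt_of_not_ge fun hij => hpi (hp hij hj))
    have := card_le_card hsub
    rw [Fin.card_Iio] at this
    omega
  · intro hpi
    have hsub : Iic i ⊆ ({j | p j} : Finset (Fin n)) := fun j hj => by
      simpa using hp (mem_Iic.mp hj) hpi
    have := card_le_card hsub
    rw [Fin.card_Iic] at this
    omega

lemma isNearRectangle_iff_forall_eq_minApex {r : ℕ} {lam : Fin r → ℕ} (hpos : ∀ i, 1 ≤ lam i)
    (hmono : Antitone lam) :
    IsNearRectangle lam ↔ ∀ i, 1 < lam i → lam i = minApex lam := by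
  constructor
  · rintro ⟨c, r₁, hc, hrect⟩ i hi
    have hlam : ∀ k, lam k = c ∨ lam k = 1 := fun k => by
      rcases lt_or_ge k.val r₁ with hk | hk
      · exact .inl ((hrect k).1 hk)
      · exact .inr ((hrect k).2 hk)
    have hic : lam i = c := (hlam i).resolve_right hi.ne'
    refine le_antisymm (le_minApex i) (sup_le (Finset.sup_le fun k _ => ?_) (hic ▸ hi.le))
    rcases hlam k with hk | hk <;> omega
  · intro hflat
    have hlower : IsLowerSet {k | 1 < lam k} := fun _ _ hji hi => lt_of_lt_of_le hi (hmono hji)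
    refine ⟨minApex lam, #{k | 1 < lam k}, le_sup_right, fun i => ⟨fun hi => ?_, fun hi => ?_⟩⟩
    · exact hflat i ((Fin.val_lt_card_filter_iff hlower i).mp hi)
    · have := mt (Fin.val_lt_card_filter_iff hlower i).mpr (not_lt.mpr hi)
      have := hpos i
      omega

/-- Proposition 4.10: the cone `C_λ` has a unique minimal integral
interior vector if and only if `λ` is a near rectangle. -/
theorem cone_min_interior_iff_near_rectangle (r : ℕ) (lam : Fin r → ℕ)
    (hpos : ∀ i, 1 ≤ lam i) (hmono : ∀ i j : Fin r, i ≤ j → lam j ≤ lam i) :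
    (∃ β : ConeIdx r lam → ℝ, InConeInterior lam β ∧ IsPosIntegral lam β ∧
      ∀ γ : ConeIdx r lam → ℝ, InConeInterior lam γ → IsPosIntegral lam γ →
        InCone lam (γ - β))
    ↔ IsNearRectangle lam := by
  rw [isNearRectangle_iff_forall_eq_minApex hpos hmono, ← forall_inCone_sub_minVec_iff]
  constructor
  · rintro ⟨β, hint, hβ, hmin⟩
    rwa [← eq_minVec_of_forall_inCone_sub hint hβ hmin]
  · exact fun hmin => ⟨minVec lam, minVec_inConeInterior, minVec_isPosIntegral, hmin⟩
end

section
/- Let n ≥ 1 and define W_n(X,Y) ∈ ℚ(X,Y) by W_n(X,Y) = (Π_{i=0}^{n−1} (1 − XⁱY))⁻¹ · (1 − x_n)⁻¹ · Σ_{I ⊆ {1,…,n−1}} binom(n,I)_{X⁻¹} · Π_{i∈I} x_i/(1 − x_i), where x_j = X^{j(2n−j)} Y^{n+j} for 1 ≤ j ≤ n. Then W_n(X⁻¹,Y⁻¹) = X^{n(2n−1)} · Y^{3n} · W_n(X,Y) in ℚ(X,Y). -/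
/-- The Gaussian binomial coefficient `binom(a,b)_x = ∏_{i=1}^{b} (1 − x^{a−b+i})/(1 − x^i)`. -/
noncomputable def gaussBinom {F : Type} [Field F] (x : F) (a b : ℕ) : F :=
  ∏ i ∈ Finset.range b, (1 - x ^ (a - i)) / (1 - x ^ (i + 1))

/-- The Gaussian multinomial coefficient `binom(n,I)_x = binom(n,i_l)_x ⋯ binom(i₂,i₁)_x`
for `I = {i₁ < ⋯ < i_l}`. -/
noncomputable def gaussMultinom {F : Type} [Field F] (x : F) (n : ℕ) (I : Finset ℕ) : F :=
  (((I.sort (· ≤ ·)).zip ((I.sort (· ≤ ·)).tail ++ [n])).map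
    fun p => gaussBinom x p.2 p.1).prod

/-- The rational function `W_n(X,Y)` of Theorem 5.2 / 5.4 for `f = (n)`, as a function
of two elements of a field. -/
noncomputable def Wabelian {F : Type} [Field F] (n : ℕ) (X Y : F) : F :=
  (∏ i ∈ Finset.range n, (1 - X ^ i * Y))⁻¹ *
    (1 - X ^ (n * (2 * n - n)) * Y ^ (n + n))⁻¹ *
    ∑ I ∈ (Finset.Icc 1 (n - 1)).powerset,
      gaussMultinom X⁻¹ n I *
        ∏ i ∈ I, (X ^ (i * (2 * n - i)) * Y ^ (n + i) *
          (1 - X ^ (i * (2 * n - i)) * Y ^ (n + i))⁻¹)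


/-!
Write `x_i = X^{i(2n-i)} Y^{n+i}`, `y_i = x_i/(1-x_i)` and
`S_n(q, y) = ∑_{I ⊆ {1,…,n-1}} binom(n,I)_q ∏_{i∈I} y_i`, so that
`W_n(X,Y) = ∏_{i<n} (1 - X^i Y)⁻¹ (1 - x_n)⁻¹ S_n(X⁻¹, y)`. Inverting `X` and `Y` inverts
every `x_i`, which replaces `y_i` by `-(1 + y_i)`, and the prefactors only pick up a sign and a
monomial. The heart of the matter is `q^{C(n,2)} S_n(q⁻¹, -(1+y)) = (-1)^{n+1} S_n(q, y)`, proved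
by strong induction from the recursion `S_n = 1 + ∑_{0<m<n} binom(n,m)_q y_m S_m` (split `I` at
its largest element) and `binom(a,b)_{q⁻¹} = q^{-b(a-b)} binom(a,b)_q`. After the substitution,
the induction step is the `q`-binomial inversion
`∑_{k ≤ m < n} (-1)^m q^{C(n-m,2)} binom(n,m)_q binom(m,k)_q = (-1)^{n+1} binom(n,k)_q`, which
reduces to `∑_j (-1)^j q^{C(j,2)} binom(r,j)_q = ∏_{i<r} (1 - q^i) = 0` for `r ≥ 1`.
-/

theorem Nat.add_choose_two (a b : ℕ) :
    (a + b).choose 2 = a.choose 2 + a * b + b.choose 2 := by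
  apply Nat.cast_injective (R := ℚ)
  push_cast [Nat.cast_choose_two]
  ring

theorem isOfFinOrder_inv_iff₀ {G₀ : Type*} [GroupWithZero G₀] {a : G₀} :
    IsOfFinOrder a⁻¹ ↔ IsOfFinOrder a := by
  simp only [isOfFinOrder_iff_pow_eq_one, inv_pow, inv_eq_one]

theorem one_sub_inv_eq_neg_inv_mul {K : Type*} [DivisionRing K] {a : K} (ha : a ≠ 0) :
    1 - a⁻¹ = -(a⁻¹ * (1 - a)) := by
  rw [mul_one_sub, inv_mul_cancel₀ ha, neg_sub]

theorem inv_mul_inv_one_sub_inv {K : Type*} [Field K] {a : K} (ha0 : a ≠ 0) (ha1 : a ≠ 1) :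
    a⁻¹ * (1 - a⁻¹)⁻¹ = -(1 + a * (1 - a)⁻¹) := by
  have : 1 - a ≠ 0 := sub_ne_zero.2 (Ne.symm ha1)
  field_simp
  ring

section GaussBinom

open Finset

variable {F : Type} [Field F] {q : F}

/-- The `q`-Pochhammer symbol `(q; q)_m`. -/
noncomputable def qPochhammer (q : F) (m : ℕ) : F := ∏ i ∈ range m, (1 - q ^ (i + 1))

theorem qPochhammer_succ (q : F) (m : ℕ) :
    qPochhammer q (m + 1) = qPochhammer q m * (1 - q ^ (m + 1)) :=
  prod_range_succ _ _

theorem one_sub_pow_ne_zero (hq : ¬IsOfFinOrder q) {i : ℕ} (hi : i ≠ 0) : 1 - q ^ i ≠ 0 :=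
  sub_ne_zero.2 fun h => hq <| isOfFinOrder_iff_pow_eq_one.2 ⟨i, Nat.pos_of_ne_zero hi, h.symm⟩

theorem qPochhammer_ne_zero (hq : ¬IsOfFinOrder q) (m : ℕ) : qPochhammer q m ≠ 0 :=
  prod_ne_zero_iff.2 fun i _ => one_sub_pow_ne_zero hq i.succ_ne_zero

theorem gaussBinom_zero_right (q : F) (a : ℕ) : gaussBinom q a 0 = 1 := rfl

theorem gaussBinom_eq_zero_of_lt {a b : ℕ} (h : a < b) : gaussBinom q a b = 0 :=
  prod_eq_zero (mem_range.2 h) (by simp)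

theorem prod_one_sub_pow_mul_qPochhammer (q : F) {a b : ℕ} (h : b ≤ a) :
    (∏ i ∈ range b, (1 - q ^ (a - i))) * qPochhammer q (a - b) = qPochhammer q a := by
  induction b with
  | zero => simp
  | succ b ih =>
    obtain ⟨c, hc⟩ : ∃ c, a - b = c + 1 := ⟨a - b - 1, by omega⟩
    rw [← ih (by omega), prod_range_succ, hc, qPochhammer_succ, show a - (b + 1) = c by omega]
    ring

theorem gaussBinom_eq_div (hq : ¬IsOfFinOrder q) {a b : ℕ} (h : b ≤ a) :
    gaussBinom q a b = qPochhammer q a / (qPochhammer q b * qPochhammer q (a - b)) := by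
  rw [← prod_one_sub_pow_mul_qPochhammer q h, mul_comm (qPochhammer q b),
    ← div_div, mul_div_cancel_right₀ _ (qPochhammer_ne_zero hq _), gaussBinom, qPochhammer,
    prod_div_distrib]

theorem gaussBinom_self (hq : ¬IsOfFinOrder q) (a : ℕ) : gaussBinom q a a = 1 := by
  rw [gaussBinom_eq_div hq le_rfl, Nat.sub_self, show qPochhammer q 0 = 1 from prod_range_zero _,
    mul_one, div_self (qPochhammer_ne_zero hq a)]

theorem gaussBinom_succ_succ (hq : ¬IsOfFinOrder q) (r j : ℕ) :
    gaussBinom q (r + 1) (j + 1) = gaussBinom q r (j + 1) + q ^ (r - j) * gaussBinom q r j := by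
  rcases lt_trichotomy r j with hrj | rfl | hjr
  · simp [gaussBinom_eq_zero_of_lt, hrj, Nat.lt_succ_of_lt hrj]
  · simp [gaussBinom_self hq, gaussBinom_eq_zero_of_lt]
  obtain ⟨s, rfl⟩ : ∃ s, r = j + 1 + s := ⟨r - (j + 1), by omega⟩
  rw [gaussBinom_eq_div hq (by omega), gaussBinom_eq_div hq (by omega),
    gaussBinom_eq_div hq (by omega), show j + 1 + s + 1 - (j + 1) = s + 1 by omega,
    show j + 1 + s - (j + 1) = s by omega, show j + 1 + s - j = s + 1 by omega,
    qPochhammer_succ _ (j + 1 + s), qPochhammer_succ _ j, qPochhammer_succ _ s]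
  have := qPochhammer_ne_zero hq j
  have := qPochhammer_ne_zero hq s
  have := one_sub_pow_ne_zero hq (i := j + 1) (by omega)
  have := one_sub_pow_ne_zero hq (i := s + 1) (by omega)
  field_simp
  ring

theorem gaussBinom_mul_gaussBinom (hq : ¬IsOfFinOrder q) {k m n : ℕ} (hkm : k ≤ m)
    (hmn : m ≤ n) :
    gaussBinom q n m * gaussBinom q m k = gaussBinom q n k * gaussBinom q (n - k) (n - m) := by
  rw [gaussBinom_eq_div hq hmn, gaussBinom_eq_div hq hkm, gaussBinom_eq_div hq (hkm.trans hmn),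
    gaussBinom_eq_div hq (by omega), show n - k - (n - m) = m - k by omega]
  have := qPochhammer_ne_zero hq m
  have := qPochhammer_ne_zero hq k
  have := qPochhammer_ne_zero hq (n - m)
  have := qPochhammer_ne_zero hq (m - k)
  have := qPochhammer_ne_zero hq (n - k)
  field_simp

theorem gaussBinom_inv (hq : q ≠ 0) {a b : ℕ} (h : b ≤ a) :
    q ^ (b * (a - b)) * gaussBinom q⁻¹ a b = gaussBinom q a b := by
  have hinv : ∀ u : ℕ, 1 - q⁻¹ ^ u = -(q ^ u)⁻¹ * (1 - q ^ u) := fun u => by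
    rw [inv_pow]
    field_simp
    ring
  have hexp : ∑ i ∈ range b, (a - i) = b * (a - b) + ∑ i ∈ range b, (i + 1) := by
    rw [← sum_range_reflect, show b * (a - b) = ∑ _ ∈ range b, (a - b) by simp,
      ← sum_add_distrib]
    exact sum_congr rfl fun j hj => by have := mem_range.1 hj; omega
  simp only [gaussBinom, hinv, mul_div_mul_comm, neg_div_neg_eq, inv_div_inv]
  rw [prod_mul_distrib, prod_div_distrib, prod_pow_eq_pow_sum, prod_pow_eq_pow_sum, hexp, pow_add]
  have := pow_ne_zero (b * (a - b)) hq
  have := pow_ne_zero (∑ i ∈ range b, (i + 1)) hq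
  field_simp

/-- The `q`-binomial theorem `∏_{i<r} (1 + q^i t) = ∑_j q^{C(j,2)} binom(r,j)_q t^j`
at `t = -1`. -/
theorem sum_neg_one_pow_mul_gaussBinom (hq : ¬IsOfFinOrder q) (r : ℕ) :
    ∑ j ∈ range (r + 1), (-1) ^ j * q ^ j.choose 2 * gaussBinom q r j =
      ∏ i ∈ range r, (1 - q ^ i) := by
  induction r with
  | zero => simp [gaussBinom_zero_right]
  | succ r ih =>
    have hshift : ∑ j ∈ range (r + 1), (-1) ^ (j + 1) * q ^ (j + 1).choose 2 *
        (q ^ (r - j) * gaussBinom q r j) =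
          -q ^ r * ∑ j ∈ range (r + 1), (-1) ^ j * q ^ j.choose 2 * gaussBinom q r j := by
      rw [mul_sum]
      refine sum_congr rfl fun j hj => ?_
      have hr : q ^ r = q ^ j * q ^ (r - j) := by
        rw [← pow_add, Nat.add_sub_cancel' (mem_range_succ_iff.1 hj)]
      rw [Nat.choose_succ_succ', Nat.choose_one_right, pow_add, hr]
      ring
    have hreindex : ∑ j ∈ range (r + 1), (-1) ^ (j + 1) * q ^ (j + 1).choose 2 *
        gaussBinom q r (j + 1) + 1 =
          ∑ j ∈ range (r + 1), (-1) ^ j * q ^ j.choose 2 * gaussBinom q r j := by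
      rw [sum_range_succ, gaussBinom_eq_zero_of_lt (Nat.lt_succ_self r), mul_zero, add_zero,
        sum_range_succ' _ r]
      simp [gaussBinom_zero_right]
    rw [prod_range_succ, ← ih, sum_range_succ']
    simp only [gaussBinom_succ_succ hq, mul_add, sum_add_distrib, hshift]
    rw [← hreindex, gaussBinom_zero_right, Nat.choose_zero_succ]
    ring

theorem sum_Ico_neg_one_pow_mul_gaussBinom_mul_gaussBinom (hq : ¬IsOfFinOrder q) {k n : ℕ}
    (hkn : k < n) :
    ∑ m ∈ Ico k n, (-1) ^ m * q ^ (n - m).choose 2 * gaussBinom q n m * gaussBinom q m k =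
      (-1) ^ (n + 1) * gaussBinom q n k := by
  set N := n - k with hN
  have hsign : ∀ j ≤ n, ((-1 : F) ^ (n - j)) = (-1) ^ n * (-1) ^ j := fun j hj => by
    rw [pow_sub₀ _ (by norm_num) hj, ← inv_pow, inv_neg, inv_one]
  have hvanish : ∑ j ∈ range (N + 1), (-1) ^ j * q ^ j.choose 2 * gaussBinom q N j = 0 := by
    rw [sum_neg_one_pow_mul_gaussBinom hq]
    exact prod_eq_zero (i := 0) (mem_range.2 (by omega)) (by simp)
  rw [sum_range_eq_add_Ico _ N.succ_pos, gaussBinom_zero_right, Nat.choose_zero_succ] at hvanish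
  simp only [mul_assoc] at hvanish
  calc ∑ m ∈ Ico k n, (-1) ^ m * q ^ (n - m).choose 2 * gaussBinom q n m * gaussBinom q m k
      = gaussBinom q n k *
          ∑ m ∈ Ico k n,
            (-1) ^ (n - (n - m)) * q ^ (n - m).choose 2 * gaussBinom q N (n - m) := by
        rw [mul_sum]
        refine sum_congr rfl fun m hm => ?_
        obtain ⟨hkm, hmn⟩ := mem_Ico.1 hm
        rw [mul_assoc, gaussBinom_mul_gaussBinom hq hkm hmn.le, Nat.sub_sub_self hmn.le]
        ring
    _ = gaussBinom q n k *
          ∑ j ∈ Ico 1 (N + 1), (-1) ^ (n - j) * q ^ j.choose 2 * gaussBinom q N j := by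
        rw [sum_Ico_reflect (fun j => (-1) ^ (n - j) * q ^ j.choose 2 * gaussBinom q N j) k
          (Nat.le_succ n), Nat.add_sub_cancel_left, show n + 1 - k = N + 1 by omega]
    _ = (-1) ^ (n + 1) * gaussBinom q n k := by
        rw [sum_congr rfl fun j hj => by rw [hsign j (by have := mem_Ico.1 hj; omega)]]
        simp only [mul_assoc, ← mul_sum]
        linear_combination (-1) ^ n * gaussBinom q n k * hvanish

theorem sum_range_mul_sum_range_gaussBinom (hq : ¬IsOfFinOrder q) (n : ℕ) (B : ℕ → F) :
    ∑ m ∈ range n, (-1) ^ m * q ^ (n - m).choose 2 * gaussBinom q n m *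
        ∑ k ∈ range (m + 1), gaussBinom q m k * B k =
      (-1) ^ (n + 1) * ∑ k ∈ range n, gaussBinom q n k * B k := by
  simp only [mul_sum, range_eq_Ico]
  rw [← sum_Ico_Ico_comm]
  refine sum_congr rfl fun k hk => ?_
  calc ∑ m ∈ Ico k n, (-1) ^ m * q ^ (n - m).choose 2 * gaussBinom q n m *
          (gaussBinom q m k * B k)
      = (∑ m ∈ Ico k n, (-1) ^ m * q ^ (n - m).choose 2 * gaussBinom q n m *
          gaussBinom q m k) * B k := by
        rw [sum_mul]
        exact sum_congr rfl fun m _ => by ring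
    _ = (-1) ^ (n + 1) * (gaussBinom q n k * B k) := by
        rw [sum_Ico_neg_one_pow_mul_gaussBinom_mul_gaussBinom hq (mem_Ico.1 hk).2]
        ring

end GaussBinom

section FlagSum

open Finset

variable {F : Type} [Field F] {q : F}

theorem Finset.sort_insert_of_forall_lt {α : Type*} [LinearOrder α] {m : α} {I : Finset α}
    (hI : ∀ i ∈ I, i < m) :
    (insert m I).sort (· ≤ ·) = I.sort (· ≤ ·) ++ [m] := by
  have hnodup : (I.sort (· ≤ ·) ++ [m]).Nodup := by
    simpa [List.nodup_append, sort_nodup] using fun h => lt_irrefl m (hI m h)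
  have hsorted : (I.sort (· ≤ ·) ++ [m]).Pairwise (· ≤ ·) :=
    List.pairwise_append.2 ⟨pairwise_sort _ _, List.pairwise_singleton _ m, fun a ha b hb => by
      rw [List.mem_singleton.1 hb]
      exact (hI a ((mem_sort _).1 ha)).le⟩
  have hset : (I.sort (· ≤ ·) ++ [m]).toFinset = insert m I := by
    ext
    simp
  rw [← hset]
  exact (List.toFinset_sort _ hnodup).2 hsorted

theorem gaussMultinom_empty (q : F) (n : ℕ) : gaussMultinom q n ∅ = 1 := by
  simp [gaussMultinom]

theorem gaussMultinom_insert_of_forall_lt (q : F) (n : ℕ) {m : ℕ} {I : Finset ℕ}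
    (hI : ∀ i ∈ I, i < m) :
    gaussMultinom q n (insert m I) = gaussBinom q n m * gaussMultinom q m I := by
  unfold gaussMultinom
  rw [sort_insert_of_forall_lt hI]
  rcases I.sort (· ≤ ·) with _ | ⟨a, t⟩
  · simp
  · rw [show ((a :: t) ++ [m]).tail = t ++ [m] from rfl, List.tail_cons,
      List.zip_append (by simp : (a :: t).length = (t ++ [m]).length)]
    simp [mul_comm]

noncomputable def flagSum (q : F) (y : ℕ → F) (n : ℕ) : F :=
  ∑ I ∈ (Icc 1 (n - 1)).powerset, gaussMultinom q n I * ∏ i ∈ I, y i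

theorem sum_powerset_Icc_gaussMultinom_mul_prod (q : F) (y : ℕ → F) (n k : ℕ) :
    ∑ I ∈ (Icc 1 k).powerset, gaussMultinom q n I * ∏ i ∈ I, y i =
      1 + ∑ m ∈ Icc 1 k, gaussBinom q n m * (y m * flagSum q y m) := by
  induction k with
  | zero => simp [gaussMultinom_empty]
  | succ k ih =>
    have hk : k + 1 ∉ Icc 1 k := by simp
    have hsplit : ∀ I ∈ (Icc 1 k).powerset,
        gaussMultinom q n (insert (k + 1) I) * ∏ i ∈ insert (k + 1) I, y i =
          gaussBinom q n (k + 1) *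
            (y (k + 1) * (gaussMultinom q (k + 1) I * ∏ i ∈ I, y i)) := by
      intro I hI
      have hlt : ∀ i ∈ I, i < k + 1 := fun i hi =>
        Nat.lt_succ_of_le (mem_Icc.1 (mem_powerset.1 hI hi)).2
      rw [gaussMultinom_insert_of_forall_lt q n hlt,
        prod_insert fun h => (hlt _ h).false]
      ring
    rw [← insert_Icc_right_eq_Icc_add_one (by omega), sum_powerset_insert hk, ih,
      sum_congr rfl hsplit, ← mul_sum, ← mul_sum, sum_insert hk]
    simp only [flagSum, Nat.add_sub_cancel]
    ring

theorem flagSum_eq_one_add_sum (q : F) (y : ℕ → F) (n : ℕ) :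
    flagSum q y n = 1 + ∑ m ∈ Ico 1 n, gaussBinom q n m * (y m * flagSum q y m) := by
  rw [flagSum, sum_powerset_Icc_gaussMultinom_mul_prod,
    show Icc 1 (n - 1) = Ico 1 n by ext; simp only [mem_Icc, mem_Ico]; omega]

theorem flagSum_eq_sum_range (q : F) (y : ℕ → F) {n : ℕ} (hn : n ≠ 0) :
    flagSum q y n =
      ∑ m ∈ range n, gaussBinom q n m * (if m = 0 then 1 else y m * flagSum q y m) := by
  rw [sum_range_eq_add_Ico _ (Nat.pos_of_ne_zero hn), flagSum_eq_one_add_sum, if_pos rfl,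
    gaussBinom_zero_right, mul_one]
  congr 1
  exact sum_congr rfl fun m hm => by rw [if_neg (by have := mem_Ico.1 hm; omega)]

theorem one_add_mul_flagSum (hq : ¬IsOfFinOrder q) (y : ℕ → F) {m : ℕ} (hm : m ≠ 0) :
    (1 + y m) * flagSum q y m =
      ∑ k ∈ range (m + 1), gaussBinom q m k * (if k = 0 then 1 else y k * flagSum q y k) := by
  rw [sum_range_succ, ← flagSum_eq_sum_range q y hm, gaussBinom_self hq, if_neg hm]
  ring

theorem pow_choose_two_mul_flagSum_inv (hq0 : q ≠ 0) (hq : ¬IsOfFinOrder q) (y : ℕ → F)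
    {n : ℕ} (hn : n ≠ 0) :
    q ^ n.choose 2 * flagSum q⁻¹ (fun i => -(1 + y i)) n = (-1) ^ (n + 1) * flagSum q y n := by
  induction n using Nat.strong_induction_on with
  | _ n ih =>
    set B : ℕ → F := fun k => if k = 0 then 1 else y k * flagSum q y k
    have hterm : ∀ m ∈ Ico 1 n,
        q ^ n.choose 2 *
            (gaussBinom q⁻¹ n m * (-(1 + y m) * flagSum q⁻¹ (fun i => -(1 + y i)) m)) =
          (-1) ^ m * q ^ (n - m).choose 2 * gaussBinom q n m *
            ∑ k ∈ range (m + 1), gaussBinom q m k * B k := by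
      intro m hm
      obtain ⟨hm1, hmn⟩ := mem_Ico.1 hm
      have hchoose : n.choose 2 = (n - m).choose 2 + m * (n - m) + m.choose 2 := by
        rw [mul_comm, ← Nat.add_choose_two, Nat.sub_add_cancel hmn.le]
      rw [← one_add_mul_flagSum hq y (by omega), hchoose, pow_add, pow_add,
        ← gaussBinom_inv hq0 hmn.le]
      linear_combination (q ^ (n - m).choose 2 * q ^ (m * (n - m)) * gaussBinom q⁻¹ n m *
        (-(1 + y m))) * ih m hmn (by omega)
    calc q ^ n.choose 2 * flagSum q⁻¹ (fun i => -(1 + y i)) n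
        = ∑ m ∈ range n, (-1) ^ m * q ^ (n - m).choose 2 * gaussBinom q n m *
            ∑ k ∈ range (m + 1), gaussBinom q m k * B k := by
          rw [flagSum_eq_one_add_sum, mul_add, mul_sum, sum_congr rfl hterm,
            sum_range_eq_add_Ico _ (Nat.pos_of_ne_zero hn)]
          simp [B, gaussBinom_zero_right]
      _ = (-1) ^ (n + 1) * flagSum q y n := by
          rw [sum_range_mul_sum_range_gaussBinom hq, flagSum_eq_sum_range q y hn]

theorem flagSum_inv_mul_inv_one_sub_inv (hq0 : q ≠ 0) (hq : ¬IsOfFinOrder q) {x : ℕ → F}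
    (hx0 : ∀ i, x i ≠ 0) (hx1 : ∀ i, x i ≠ 1) {n : ℕ} (hn : n ≠ 0) :
    flagSum q⁻¹ (fun i => (x i)⁻¹ * (1 - (x i)⁻¹)⁻¹) n =
      (q ^ n.choose 2)⁻¹ * ((-1) ^ (n + 1) * flagSum q (fun i => x i * (1 - x i)⁻¹) n) := by
  rw [← pow_choose_two_mul_flagSum_inv hq0 hq _ hn, inv_mul_cancel_left₀ (pow_ne_zero _ hq0)]
  exact congrArg (flagSum q⁻¹ · n) (funext fun i => inv_mul_inv_one_sub_inv (hx0 i) (hx1 i))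

end FlagSum

section Wabelian

open Finset

variable {F : Type} [Field F]

theorem prod_range_one_sub_inv_pow_mul_inv {X Y : F} (hX : X ≠ 0) (hY : Y ≠ 0) (n : ℕ) :
    ∏ i ∈ range n, (1 - X⁻¹ ^ i * Y⁻¹) =
      (-1) ^ n * (X ^ n.choose 2 * Y ^ n)⁻¹ * ∏ i ∈ range n, (1 - X ^ i * Y) := by
  induction n with
  | zero => simp
  | succ n ih =>
    rw [prod_range_succ, prod_range_succ, ih, Nat.choose_succ_succ', Nat.choose_one_right,
      inv_pow, ← mul_inv, one_sub_inv_eq_neg_inv_mul (mul_ne_zero (pow_ne_zero n hX) hY)]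
    ring

theorem Wabelian_inv {X Y : F} (hX : X ≠ 0) (hY : Y ≠ 0)
    (hXY : ∀ a b : ℕ, X ^ a * Y ^ b = 1 → a = 0 ∧ b = 0) {n : ℕ} (hn : n ≠ 0) :
    Wabelian n X⁻¹ Y⁻¹ = X ^ (n * (2 * n - 1)) * Y ^ (3 * n) * Wabelian n X Y := by
  set x : ℕ → F := fun i => X ^ (i * (2 * n - i)) * Y ^ (n + i)
  have hx0 : ∀ i, x i ≠ 0 := fun i => mul_ne_zero (pow_ne_zero _ hX) (pow_ne_zero _ hY)
  have hx1 : ∀ i, x i ≠ 1 := fun i h => hn (by have := (hXY _ _ h).2; omega)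
  have hX' : ¬IsOfFinOrder X⁻¹ := isOfFinOrder_inv_iff₀.not.2 fun h => by
    obtain ⟨k, hk, hk1⟩ := isOfFinOrder_iff_pow_eq_one.1 h
    have := hXY k 0 (by rw [pow_zero, mul_one, hk1])
    omega
  have hflag := flagSum_inv_mul_inv_one_sub_inv (inv_ne_zero hX) hX' hx0 hx1 hn
  rw [inv_inv, inv_pow, inv_inv] at hflag
  have hXexp : n * (2 * n - 1) = n.choose 2 + n * n + n.choose 2 := by
    rw [← Nat.add_choose_two, ← two_mul, Nat.choose_two_right, mul_assoc,
      Nat.mul_div_cancel_left _ two_pos]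
  have hWinv : Wabelian n X⁻¹ Y⁻¹ =
      (∏ i ∈ range n, (1 - X⁻¹ ^ i * Y⁻¹))⁻¹ * (1 - (x n)⁻¹)⁻¹ *
        flagSum X (fun i => (x i)⁻¹ * (1 - (x i)⁻¹)⁻¹) n := by
    simp only [Wabelian, flagSum, x, inv_pow, mul_inv, inv_inv]
  have hW : Wabelian n X Y = (∏ i ∈ range n, (1 - X ^ i * Y))⁻¹ * (1 - x n)⁻¹ *
      flagSum X⁻¹ (fun i => x i * (1 - x i)⁻¹) n := rfl
  have hxn : x n = X ^ (n * n) * Y ^ (n + n) := by simp only [x, two_mul, Nat.add_sub_cancel]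
  rw [hWinv, hW, hflag, prod_range_one_sub_inv_pow_mul_inv hX hY, hXexp, pow_succ,
    show 3 * n = n + (n + n) by ring, one_sub_inv_eq_neg_inv_mul (hx0 n)]
  generalize flagSum X⁻¹ (fun i => x i * (1 - x i)⁻¹) n = S
  generalize ∏ i ∈ range n, (1 - X ^ i * Y) = P
  generalize 1 - x n = D
  rw [hxn]
  have := pow_ne_zero (n * n) hX
  have := pow_ne_zero (n + n) hY
  have := pow_ne_zero n (neg_ne_zero.2 (one_ne_zero (α := F)))
  field_simp
  ring

end Wabelian

/-- the functional equation
`W_n(X⁻¹,Y⁻¹) = X^{n(2n−1)} Y^{3n} W_n(X,Y)` in `ℚ(X,Y)`. -/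
theorem Wabelian_inv_funeq (n : ℕ) (hn : 1 ≤ n) :
    letI K := FractionRing (MvPolynomial (Fin 2) ℚ)
    letI Xv : K := algebraMap (MvPolynomial (Fin 2) ℚ) K (MvPolynomial.X 0)
    letI Yv : K := algebraMap (MvPolynomial (Fin 2) ℚ) K (MvPolynomial.X 1)
    Wabelian n Xv⁻¹ Yv⁻¹ = Xv ^ (n * (2 * n - 1)) * Yv ^ (3 * n) * Wabelian n Xv Yv := by
  set R := MvPolynomial (Fin 2) ℚ
  have hinj : Function.Injective (algebraMap R (FractionRing R)) := IsFractionRing.injective R _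
  refine Wabelian_inv ((map_ne_zero_iff _ hinj).2 (MvPolynomial.X_ne_zero 0))
    ((map_ne_zero_iff _ hinj).2 (MvPolynomial.X_ne_zero 1)) (fun a b h => ?_) (by omega)
  have hpoly : (MvPolynomial.X 0 ^ a * MvPolynomial.X 1 ^ b : R) = 1 :=
    hinj (by simpa using h)
  constructor
  · simpa [zero_pow_eq_one₀] using congrArg (MvPolynomial.eval ![0, 1]) hpoly
  · simpa [zero_pow_eq_one₀] using congrArg (MvPolynomial.eval ![1, 0]) hpoly
end
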